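/- arXiv:1406.4897 — 2 statements merged into one kernel-verified Lean document; each statement's English description precedes it below -/
import Mathlib

section
/- Let G be a group, H ◁ G of finite index with G/H abelian. An endomorphism φ of the forgetful functor on a category C of representations of G (stable under character twists) commutes with all H-intertwiners if and only if φ(χπ) = φ(π) for every π ∈ C and every character χ of G/H. -/
noncomputable section

open scoped TensorProduct DirectSum

universe u

section Defs

variable {G : Type u} [Group G]

/-- The submodule of equivariant linear maps between two representations. -/
def equivHom {M : Type*} [Monoid M] {V₁ V₂ : Type*}
    [AddCommGroup V₁] [Module ℂ V₁] [AddCommGroup V₂] [Module ℂ V₂]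
    (ρ₁ : Representation ℂ M V₁) (ρ₂ : Representation ℂ M V₂) :
    Submodule ℂ (V₁ →ₗ[ℂ] V₂) where
  carrier := {f | ∀ (m : M) (v : V₁), f (ρ₁ m v) = ρ₂ m (f v)}
  add_mem' := by intro a b ha hb m v; simp_all
  zero_mem' := by intro m v; simp
  smul_mem' := by intro c f hf m v; simp_all

instance equivHom.instAddCommGroup {M : Type*} [Monoid M] {V₁ V₂ : Type*}
    [AddCommGroup V₁] [Module ℂ V₁] [AddCommGroup V₂] [Module ℂ V₂]
    (ρ₁ : Representation ℂ M V₁) (ρ₂ : Representation ℂ M V₂) :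
    AddCommGroup ↥(equivHom ρ₁ ρ₂) :=
  Submodule.addCommGroup _

instance equivHom.instModule {M : Type*} [Monoid M] {V₁ V₂ : Type*}
    [AddCommGroup V₁] [Module ℂ V₁] [AddCommGroup V₂] [Module ℂ V₂]
    (ρ₁ : Representation ℂ M V₁) (ρ₂ : Representation ℂ M V₂) :
    Module ℂ ↥(equivHom ρ₁ ρ₂) :=
  Submodule.module _

/-- Twist of a representation by a `ℂˣ`-valued character. -/
def twist {V : Type*} [AddCommGroup V] [Module ℂ V]
    (ρ : Representation ℂ G V) (χ : G →* ℂˣ) : Representation ℂ G V where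
  toFun g := (χ g : ℂ) • ρ g
  map_one' := by simp
  map_mul' g₁ g₂ := by
    ext v
    simp [Module.End.mul_apply, LinearMap.smul_apply, map_mul, smul_smul,
      map_smul, mul_comm, mul_left_comm]

@[simp] lemma twist_apply {V : Type*} [AddCommGroup V] [Module ℂ V]
    (ρ : Representation ℂ G V) (χ : G →* ℂˣ) (g : G) (v : V) :
    twist ρ χ g v = (χ g : ℂ) • ρ g v := rfl

/-- Characters of `G` trivial on `H`, i.e. characters of `G/H`. -/
def TrivOn (H : Subgroup G) : Type u := {χ : G →* ℂˣ // ∀ h ∈ H, χ h = 1}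

/-- Irreducibility of a representation. -/
def IsIrreducibleRep {M : Type*} [Monoid M] {V : Type*} [AddCommGroup V] [Module ℂ V]
    (ρ : Representation ℂ M V) : Prop :=
  (∃ v : V, v ≠ 0) ∧
    ∀ W : Submodule ℂ V, (∀ (m : M) (v : V), v ∈ W → ρ m v ∈ W) → W = ⊥ ∨ W = ⊤

/-- Equivalence (isomorphism) of representations. -/
def RepEquiv {M : Type*} [Monoid M] {V₁ V₂ : Type*}
    [AddCommGroup V₁] [Module ℂ V₁] [AddCommGroup V₂] [Module ℂ V₂]
    (ρ₁ : Representation ℂ M V₁) (ρ₂ : Representation ℂ M V₂) : Prop :=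
  ∃ e : V₁ ≃ₗ[ℂ] V₂, ∀ (m : M) (v : V₁), e (ρ₁ m v) = ρ₂ m (e v)

/-- Restriction of a representation of `G` to a subgroup `H`. -/
def resR (H : Subgroup G) {V : Type*} [AddCommGroup V] [Module ℂ V]
    (ρ : Representation ℂ G V) : Representation ℂ H V := ρ.comp H.subtype

@[simp] lemma resR_apply (H : Subgroup G) {V : Type*} [AddCommGroup V] [Module ℂ V]
    (ρ : Representation ℂ G V) (h : H) : resR H ρ h = ρ ↑h := rfl

end Defs
section Ind

variable {G : Type u} [Group G] (H : Subgroup G)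
variable {V : Type u} [AddCommGroup V] [Module ℂ V]

/-- The space of the induced representation: functions `w : G → V` with
`w (h * g) = ρ h (w g)` for `h ∈ H`. -/
def IndSpace (ρ : Representation ℂ H V) : Submodule ℂ (G → V) where
  carrier := {w | ∀ (h : H) (g : G), w (↑h * g) = ρ h (w g)}
  add_mem' := by intro a b ha hb h g; simp_all
  zero_mem' := by intro h g; simp
  smul_mem' := by intro c a ha h g; simp_all

/-- The induced representation `Ind_H^G ρ`, acting by right translation. -/
def indRep (ρ : Representation ℂ H V) : Representation ℂ G ↥(IndSpace H ρ) where
  toFun g :=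
    { toFun := fun w => ⟨fun x => (w : G → V) (x * g), by
        intro h x
        have := w.2 h (x * g)
        simpa [mul_assoc] using this⟩
      map_add' := by intro a b; apply Subtype.ext; funext x; simp
      map_smul' := by intro c a; apply Subtype.ext; funext x; simp }
  map_one' := by
    apply LinearMap.ext; intro w; apply Subtype.ext; funext x; simp
  map_mul' := by
    intro g₁ g₂
    apply LinearMap.ext; intro w; apply Subtype.ext; funext x
    simp [Module.End.mul_apply, mul_assoc]

@[simp] lemma indRep_apply (ρ : Representation ℂ H V) (g : G) (w : ↥(IndSpace H ρ)) (x : G) :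
    ((indRep H ρ g w : ↥(IndSpace H ρ)) : G → V) x = (w : G → V) (x * g) := rfl

/-- Evaluation at `g` of functions in the induced representation. -/
def evalAt (ρ : Representation ℂ H V) (g : G) : ↥(IndSpace H ρ) →ₗ[ℂ] V where
  toFun w := (w : G → V) g
  map_add' := by intro a b; simp
  map_smul' := by intro c a; simp

@[simp] lemma evalAt_apply (ρ : Representation ℂ H V) (g : G) (w : ↥(IndSpace H ρ)) :
    evalAt H ρ g w = (w : G → V) g := rfl

/-- Extension by zero: the section `e_g^*` of `evalAt`, supported on the coset `H g`. -/
def extAt [DecidablePred (· ∈ H)] (ρ : Representation ℂ H V) (g : G) :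
    V →ₗ[ℂ] ↥(IndSpace H ρ) where
  toFun v := ⟨fun x => if hx : x * g⁻¹ ∈ H then ρ ⟨x * g⁻¹, hx⟩ v else 0, by
    intro h x
    dsimp only
    by_cases hx : x * g⁻¹ ∈ H
    · have hx' : (↑h * x) * g⁻¹ ∈ H := by
        have e : (↑h * x) * g⁻¹ = ↑h * (x * g⁻¹) := by group
        rw [e]; exact H.mul_mem h.2 hx
      rw [dif_pos hx', dif_pos hx]
      have e2 : (⟨(↑h * x) * g⁻¹, hx'⟩ : H) = h * ⟨x * g⁻¹, hx⟩ := by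
        apply Subtype.ext; simp [mul_assoc]
      rw [e2, map_mul]
      rfl
    · have hx' : ¬ ((↑h * x) * g⁻¹ ∈ H) := by
        intro hc
        apply hx
        have e : x * g⁻¹ = (↑h)⁻¹ * ((↑h * x) * g⁻¹) := by group
        rw [e]; exact H.mul_mem (H.inv_mem h.2) hc
      rw [dif_neg hx', dif_neg hx, map_zero]⟩
  map_add' := by
    intro a b; apply Subtype.ext; funext x
    by_cases hx : x * g⁻¹ ∈ H <;> simp [hx]
  map_smul' := by
    intro c a; apply Subtype.ext; funext x
    by_cases hx : x * g⁻¹ ∈ H <;> simp [hx]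

/-- The projector `p_g = e_g^* ∘ e_g` onto functions supported on `H g`. -/
def projAt [DecidablePred (· ∈ H)] (ρ : Representation ℂ H V) (g : G) :
    ↥(IndSpace H ρ) →ₗ[ℂ] ↥(IndSpace H ρ) :=
  extAt H ρ g ∘ₗ evalAt H ρ g

/-- Functoriality of induction on `H`-equivariant maps. -/
def indMap {V₁ V₂ : Type u} [AddCommGroup V₁] [Module ℂ V₁] [AddCommGroup V₂] [Module ℂ V₂]
    (ρ₁ : Representation ℂ H V₁) (ρ₂ : Representation ℂ H V₂)
    (α : V₁ →ₗ[ℂ] V₂) (hα : ∀ (h : H) (v : V₁), α (ρ₁ h v) = ρ₂ h (α v)) :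
    ↥(IndSpace H ρ₁) →ₗ[ℂ] ↥(IndSpace H ρ₂) where
  toFun w := ⟨fun x => α ((w : G → V₁) x), by
    intro h x
    dsimp only
    rw [w.2 h x, hα]⟩
  map_add' := by intro a b; apply Subtype.ext; funext x; simp
  map_smul' := by intro c a; apply Subtype.ext; funext x; simp

/-- Conjugate representation `π^g`, given by `h ↦ π (g⁻¹ h g)`. -/
def conjRep [hN : H.Normal] (ρ : Representation ℂ H V) (g : G) : Representation ℂ H V :=
  ρ.comp
    { toFun := fun h => ⟨g⁻¹ * ↑h * g, by simpa using hN.conj_mem ↑h h.2 g⁻¹⟩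
      map_one' := by apply Subtype.ext; simp
      map_mul' := by
        intro a b; apply Subtype.ext
        show g⁻¹ * ↑(a * b) * g = (g⁻¹ * ↑a * g) * (g⁻¹ * ↑b * g)
        rw [Subgroup.coe_mul]; group }

@[simp] lemma conjRep_apply [H.Normal] (ρ : Representation ℂ H V) (g : G) (h : H) (v : V) :
    conjRep H ρ g h v = ρ ⟨g⁻¹ * ↑h * g, by simpa using ‹H.Normal›.conj_mem ↑h h.2 g⁻¹⟩ v := rfl

attribute [irreducible] indRep

end Ind
section Bundled

/-- A bundled (complex, linear) representation of a group `M`. -/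
structure RepOn (M : Type u) [Group M] : Type (u + 1) where
  V : Type u
  [acg : AddCommGroup V]
  [mod : Module ℂ V]
  ρ : Representation ℂ M V

attribute [instance] RepOn.acg RepOn.mod

variable {G : Type u} [Group G]

/-- The bundled induced representation. -/
def indRepOn (H : Subgroup G) (σ : RepOn ↥H) : RepOn G :=
  { V := ↥(IndSpace H σ.ρ), ρ := indRep H σ.ρ }

/-- The bundled restriction to a subgroup. -/
def resRepOn (H : Subgroup G) (P : RepOn G) : RepOn ↥H :=
  { V := P.V, ρ := resR H P.ρ }

/-- The bundled twist by a character trivial on `H`. -/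
def twistRepOn {H : Subgroup G} (P : RepOn G) (χ : TrivOn H) : RepOn G :=
  { V := P.V, ρ := twist P.ρ χ.1 }

/-- A family of endomorphisms (one for each bundled representation) commuting with all
intertwiners between members of `C`: an endomorphism of the forgetful functor on `C`. -/
def Commutes {M : Type u} [Group M] (C : Set (RepOn M))
    (φ : ∀ π : RepOn M, π.V →ₗ[ℂ] π.V) : Prop :=
  ∀ π₁ ∈ C, ∀ π₂ ∈ C, ∀ α : π₁.V →ₗ[ℂ] π₂.V,
    (∀ m : M, α ∘ₗ π₁.ρ m = π₂.ρ m ∘ₗ α) → α ∘ₗ φ π₁ = φ π₂ ∘ₗ α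

/-- Commutation with all `H`-intertwiners between members of `C` (support in `H`). -/
def HCommutes (H : Subgroup G) (C : Set (RepOn G))
    (φ : ∀ π : RepOn G, π.V →ₗ[ℂ] π.V) : Prop :=
  ∀ π₁ ∈ C, ∀ π₂ ∈ C, ∀ α : π₁.V →ₗ[ℂ] π₂.V,
    (∀ h : H, α ∘ₗ π₁.ρ ↑h = π₂.ρ ↑h ∘ₗ α) → α ∘ₗ φ π₁ = φ π₂ ∘ₗ α

/-- The direct sum of a family of bundled representations. -/
def dsumRepOn {M : Type u} [Group M] {ι : Type u} [DecidableEq ι] (f : ι → RepOn M) :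
    RepOn M where
  V := ⨁ i, (f i).V
  ρ :=
    { toFun := fun m => DFinsupp.mapRange.linearMap (fun i => (f i).ρ m)
      map_one' := by
        have : (fun i => (f i).ρ (1 : M)) = fun i => (LinearMap.id : (f i).V →ₗ[ℂ] (f i).V) := by
          funext i; rw [map_one]; rfl
        rw [this, DFinsupp.mapRange.linearMap_id]
        rfl
      map_mul' := by
        intro m₁ m₂
        have : (fun i => (f i).ρ (m₁ * m₂)) =
            fun i => ((f i).ρ m₁) ∘ₗ ((f i).ρ m₂) := by
          funext i; rw [map_mul]; rfl
        rw [this, DFinsupp.mapRange.linearMap_comp]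
        rfl }

/-- Closure of a class of representations under subobjects, quotients and direct sums. -/
def ClosedRep {M : Type u} [Group M] (C : Set (RepOn M)) : Prop :=
  (∀ P ∈ C, ∀ σ : RepOn M, (∃ f : σ.V →ₗ[ℂ] P.V, Function.Injective f ∧
      ∀ (m : M) (v : σ.V), f (σ.ρ m v) = P.ρ m (f v)) → σ ∈ C) ∧
  (∀ P ∈ C, ∀ σ : RepOn M, (∃ f : P.V →ₗ[ℂ] σ.V, Function.Surjective f ∧
      ∀ (m : M) (v : P.V), f (P.ρ m v) = σ.ρ m (f v)) → σ ∈ C) ∧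
  (∀ (ι : Type u) (_ : DecidableEq ι) (f : ι → RepOn M),
      (∀ i, f i ∈ C) → dsumRepOn f ∈ C)

/-- The Fourier transform of a finitely supported function at a representation. -/
def fourierT {M : Type u} [Group M] (f : M →₀ ℂ) {V : Type*} [AddCommGroup V] [Module ℂ V]
    (ρ : Representation ℂ M V) : V →ₗ[ℂ] V :=
  f.sum fun g c => c • (ρ g : V →ₗ[ℂ] V)

end Bundled

/-! The forward direction holds because the identity is an `H`-intertwiner `π → χπ`.
Conversely, an `H`-intertwiner `α : π₁ → π₂` is a vector of `Hom(π₁, π₂)` fixed by `H`, so its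
`G`-translates are indexed by the finite abelian group `G ⧸ H`. Fourier analysis on `G ⧸ H` writes
`|(G ⧸ H)^| • α` as the sum of the components `α_χ = ∑_q χ(q)⁻¹ q·α`, and each `α_χ` is a
`G`-intertwiner `χπ₁ → π₂`; so `φ` commutes with every `α_χ` because `φ(χπ₁) = φ(π₁)`,
hence with `α`. -/

open Finset

theorem CommGroup.sum_monoidHom_apply_eq_zero {A R : Type*} [CommGroup A] [Finite A]
    [CommRing R] [IsDomain R] [HasEnoughRootsOfUnity R (Monoid.exponent A)]
    [Fintype (A →* Rˣ)] {a : A} (ha : a ≠ 1) : ∑ χ : A →* Rˣ, (χ a : R) = 0 := by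
  obtain ⟨χ₀, hχ₀⟩ := exists_apply_ne_one_of_hasEnoughRootsOfUnity A R ha
  refine eq_zero_of_mul_eq_self_left (b := (χ₀ a : R)) (by simpa [Units.val_eq_one]) ?_
  simp only [mul_sum, ← Units.val_mul, ← MonoidHom.mul_apply]
  exact Fintype.sum_bijective _ (Group.mulLeft_bijective χ₀) _ _ fun _ ↦ rfl

namespace Representation

section LinHom

variable {k G V U : Type*} [CommRing k] [Group G] [AddCommGroup V] [Module k V]
  [AddCommGroup U] [Module k U] (ρV : Representation k G V) (ρU : Representation k G U)

theorem linHom_apply_eq_smul_iff (g : G) (c : k) (f : V →ₗ[k] U) :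
    linHom ρV ρU g f = c • f ↔ ρU g ∘ₗ f = c • (f ∘ₗ ρV g) := by
  have hcancel : ρV g⁻¹ ∘ₗ ρV g = LinearMap.id := by
    rw [← Module.End.mul_eq_comp, ← map_mul, inv_mul_cancel, map_one, Module.End.one_eq_id]
  have hcancel' : ρV g ∘ₗ ρV g⁻¹ = LinearMap.id := by
    rw [← Module.End.mul_eq_comp, ← map_mul, mul_inv_cancel, map_one, Module.End.one_eq_id]
  rw [linHom_apply]
  constructor
  · intro h
    rw [← LinearMap.smul_comp, ← h, LinearMap.comp_assoc, LinearMap.comp_assoc, hcancel,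
      LinearMap.comp_id]
  · intro h
    rw [← LinearMap.comp_assoc, h, LinearMap.smul_comp, LinearMap.comp_assoc, hcancel',
      LinearMap.comp_id]

end LinHom

variable {k G W : Type*} [CommRing k] [Group G] [AddCommGroup W] [Module k W]
  (ρ : Representation k G W) {H : Subgroup G} (w : W) (hw : ∀ h : H, ρ h w = w)

def cosetOrbit : G ⧸ H → W :=
  Quotient.lift (fun g ↦ ρ g w) fun a b hab ↦ by
    have hmem : a⁻¹ * b ∈ H := QuotientGroup.leftRel_apply.mp hab
    change ρ a w = ρ b w
    rw [← mul_inv_cancel_left a b, map_mul, Module.End.mul_apply, hw ⟨_, hmem⟩]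

@[simp]
theorem cosetOrbit_mk (g : G) : cosetOrbit ρ w hw (g : G ⧸ H) = ρ g w := rfl

variable [H.Normal]

theorem cosetOrbit_one : cosetOrbit ρ w hw 1 = w := by
  rw [← QuotientGroup.mk_one, cosetOrbit_mk, map_one, Module.End.one_apply]

theorem apply_cosetOrbit (g : G) (q : G ⧸ H) :
    ρ g (cosetOrbit ρ w hw q) = cosetOrbit ρ w hw (g * q) := by
  induction q using QuotientGroup.induction_on with
  | H x => rw [← QuotientGroup.mk_mul, cosetOrbit_mk, cosetOrbit_mk, map_mul, Module.End.mul_apply]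

variable [Fintype (G ⧸ H)]

def charComponent (χ : G ⧸ H →* kˣ) : W :=
  ∑ q, (χ q⁻¹ : k) • cosetOrbit ρ w hw q

theorem apply_charComponent (χ : G ⧸ H →* kˣ) (g : G) :
    ρ g (charComponent ρ w hw χ) = (χ g : k) • charComponent ρ w hw χ := by
  simp only [charComponent, map_sum, map_smul, apply_cosetOrbit, smul_sum, smul_smul]
  refine Fintype.sum_equiv (Equiv.mulLeft (g : G ⧸ H)) _ _ fun q ↦ ?_
  rw [Equiv.coe_mulLeft, mul_inv_rev, map_mul, Units.val_mul, mul_left_comm, ← Units.val_mul,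
    ← map_mul, mul_inv_cancel, map_one, Units.val_one, mul_one]

open scoped IsMulCommutative in
theorem sum_charComponent [IsDomain k] [IsMulCommutative (G ⧸ H)]
    [HasEnoughRootsOfUnity k (Monoid.exponent (G ⧸ H))] [Fintype (G ⧸ H →* kˣ)] :
    ∑ χ : G ⧸ H →* kˣ, charComponent ρ w hw χ = (Fintype.card (G ⧸ H →* kˣ) : k) • w := by
  classical
  have horth (q : G ⧸ H) : ∑ χ : G ⧸ H →* kˣ, (χ q⁻¹ : k) =
      if q = 1 then (Fintype.card (G ⧸ H →* kˣ) : k) else 0 := by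
    split_ifs with hq
    · simp [hq]
    · exact CommGroup.sum_monoidHom_apply_eq_zero (inv_ne_one.mpr hq)
  simp only [charComponent]
  rw [sum_comm]
  simp only [← sum_smul, horth, ite_smul, zero_smul, sum_ite_eq', mem_univ, if_true,
    cosetOrbit_one]

end Representation

section Twist

variable {G : Type u} [Group G] {H : Subgroup G}

theorem twistRepOn_apply_of_mem (P : RepOn G) (χ : TrivOn H) {h : G} (hh : h ∈ H) :
    (twistRepOn P χ).ρ h = P.ρ h := by
  change (χ.1 h : ℂ) • P.ρ h = P.ρ h
  rw [χ.2 h hh, Units.val_one, one_smul]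

theorem HCommutes.twist_eq {C : Set (RepOn G)} {φ : ∀ P : RepOn G, P.V →ₗ[ℂ] P.V}
    (hH : HCommutes H C φ) (htwist : ∀ P ∈ C, ∀ χ : TrivOn H, twistRepOn P χ ∈ C)
    {P : RepOn G} (hP : P ∈ C) (χ : TrivOn H) : φ (twistRepOn P χ) = φ P :=
  (hH P hP _ (htwist P hP χ) LinearMap.id fun h ↦ by
    rw [twistRepOn_apply_of_mem P χ h.2]; rfl).symm

def TrivOn.ofQuotient [H.Normal] (χ : G ⧸ H →* ℂˣ) : TrivOn H :=
  ⟨χ.comp (QuotientGroup.mk' H), fun h hh ↦ by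
    rw [MonoidHom.comp_apply, QuotientGroup.mk'_apply, (QuotientGroup.eq_one_iff h).mpr hh,
      map_one]⟩

open scoped IsMulCommutative in
theorem Commutes.comp_eq_of_forall_twist [H.Normal] [Finite (G ⧸ H)]
    [IsMulCommutative (G ⧸ H)] {C : Set (RepOn G)}
    (htwist : ∀ P ∈ C, ∀ χ : TrivOn H, twistRepOn P χ ∈ C)
    {φ : ∀ P : RepOn G, P.V →ₗ[ℂ] P.V} (hφ : Commutes C φ)
    (hT : ∀ P ∈ C, ∀ χ : TrivOn H, φ (twistRepOn P χ) = φ P)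
    {π₁ π₂ : RepOn G} (h₁ : π₁ ∈ C) (h₂ : π₂ ∈ C) (α : π₁.V →ₗ[ℂ] π₂.V)
    (hα : ∀ h : H, α ∘ₗ π₁.ρ ↑h = π₂.ρ ↑h ∘ₗ α) :
    α ∘ₗ φ π₁ = φ π₂ ∘ₗ α := by
  have : Fintype (G ⧸ H) := Fintype.ofFinite _
  have : NeZero (Monoid.exponent (G ⧸ H)) := ⟨Monoid.exponent_ne_zero_of_finite⟩
  have : Finite (G ⧸ H →* ℂˣ) := Finite.of_equiv _
    (CommGroup.monoidHom_mulEquiv_of_hasEnoughRootsOfUnity (G ⧸ H) ℂ).some.symm.toEquiv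
  have : Fintype (G ⧸ H →* ℂˣ) := Fintype.ofFinite _
  let ρ := Representation.linHom π₁.ρ π₂.ρ
  have hfix (h : H) : ρ h α = α := by
    have := (Representation.linHom_apply_eq_smul_iff π₁.ρ π₂.ρ h 1 α).mpr
      (by rw [one_smul, hα h])
    rwa [one_smul] at this
  let E := LinearMap.eqLocus (LinearMap.lcomp ℂ π₂.V (φ π₁))
    (LinearMap.llcomp ℂ π₁.V π₂.V π₂.V (φ π₂))
  have hcomponent (χ : G ⧸ H →* ℂˣ) : ρ.charComponent α hfix χ ∈ E := by
    have hint : ∀ g : G, ρ.charComponent α hfix χ ∘ₗ (twistRepOn π₁ (.ofQuotient χ)).ρ g =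
        π₂.ρ g ∘ₗ ρ.charComponent α hfix χ := fun g ↦ by
      change _ ∘ₗ ((χ g : ℂ) • π₁.ρ g) = _
      rw [LinearMap.comp_smul]
      exact ((Representation.linHom_apply_eq_smul_iff _ _ _ _ _).mp
        (ρ.apply_charComponent α hfix χ g)).symm
    have := hφ _ (htwist π₁ h₁ (.ofQuotient χ)) π₂ h₂ _ hint
    rwa [hT π₁ h₁] at this
  have hsum : (Fintype.card (G ⧸ H →* ℂˣ) : ℂ) • α ∈ E :=
    ρ.sum_charComponent α hfix ▸ E.sum_mem fun χ _ ↦ hcomponent χ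
  exact (E.smul_mem_iff (Nat.cast_ne_zero.mpr Fintype.card_ne_zero)).mp hsum

end Twist

/-- Let `H ◁ G` be of finite index with `G/H` abelian and `C` a class of
representations of `G` stable under twisting by characters of `G/H`.  An endomorphism `φ`
of the forgetful functor on `C` commutes with all `H`-intertwiners between members of `C`
if and only if `φ (χ π) = φ (π)` for every `π ∈ C` and every character `χ` of `G/H`. -/
theorem statement11 {G : Type u} [Group G] (H : Subgroup G) [H.Normal] [Finite (G ⧸ H)]
    (hab : ∀ a b : G ⧸ H, a * b = b * a)
    (C : Set (RepOn G))
    (htwist : ∀ P ∈ C, ∀ χ : TrivOn H, twistRepOn P χ ∈ C)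
    (φ : ∀ P : RepOn G, P.V →ₗ[ℂ] P.V) (hφ : Commutes C φ) :
    HCommutes H C φ ↔ ∀ P ∈ C, ∀ χ : TrivOn H, φ (twistRepOn P χ) = φ P := by
  have : IsMulCommutative (G ⧸ H) := isMulCommutative_iff.mpr hab
  exact ⟨fun hH P hP ↦ hH.twist_eq htwist hP,
    fun hT π₁ h₁ π₂ h₂ ↦ hφ.comp_eq_of_forall_twist htwist hT h₁ h₂⟩
end
end

section
/- Let G be a locally profinite group with Haar measure, H ◁ G open of finite index, and f a smooth compactly supported function on G. Then the Fourier transform f̂ (given on a representation π by π(f) = ∫_G f(g)π(g)dg) commutes with all H-intertwiners between representations in C if and only if f̂ = (f·1_H)^, where 1_H is the indicator function of H. Consequently, if the Fourier transform is injective on C, f̂ is supported in H (in the intertwining sense) iff f is supported in H. -/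
noncomputable section

open scoped TensorProduct DirectSum

universe u

/-! Averaging `f̂` over the twists by all characters `ψ` of `G/H` multiplies the coefficient
of `π g` by `∑_ψ ψ(gH)`, which by character orthogonality is `|Ĝ/H|` or `0` according as
`g ∈ H` or not; so the average is `(f·1_H)^`. If `f̂` commutes with `H`-intertwiners, then
applying this to the identity map `π → π ⊗ ψ` shows that `f̂` is the same on every twist, hence
`f̂ = (f·1_H)^`.
Conversely, `(f·1_H)^` is a combination of the operators `π h`, `h ∈ H`. -/

theorem MonoidHom.sum_units_apply_eq_ite {A K : Type*} [CommGroup A] [Finite A] [DecidableEq A]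
    [Field K] [HasEnoughRootsOfUnity K (Monoid.exponent A)] [Fintype (A →* Kˣ)] (a : A) :
    ∑ ψ : A →* Kˣ, (ψ a : K) = if a = 1 then (Fintype.card (A →* Kˣ) : K) else 0 := by
  split_ifs with ha
  · simp [ha]
  obtain ⟨ψ₀, hψ₀⟩ := CommGroup.exists_apply_ne_one_of_hasEnoughRootsOfUnity A K ha
  have hshift : (ψ₀ a : K) * ∑ ψ : A →* Kˣ, (ψ a : K) = ∑ ψ : A →* Kˣ, (ψ a : K) := by
    rw [Finset.mul_sum]
    exact Fintype.sum_bijective (ψ₀ * ·) (Group.mulLeft_bijective ψ₀) _ _ fun ψ => by simp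
  have hψ₀' : (ψ₀ a : K) ≠ 1 := fun h => hψ₀ (Units.ext h)
  have hfactor : ((ψ₀ a : K) - 1) * ∑ ψ : A →* Kˣ, (ψ a : K) = 0 := by
    rw [sub_mul, one_mul, hshift, sub_self]
  exact (mul_eq_zero.mp hfactor).resolve_left (sub_ne_zero.mpr hψ₀')

section FourierTransform

variable {G : Type u} [Group G] {V : Type*} [AddCommGroup V] [Module ℂ V]

lemma fourierT_eq_sum (f : G →₀ ℂ) (ρ : Representation ℂ G V) :
    fourierT f ρ = ∑ g ∈ f.support, f g • (ρ g : V →ₗ[ℂ] V) := rfl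

lemma fourierT_filter (f : G →₀ ℂ) (ρ : Representation ℂ G V) (p : G → Prop) [DecidablePred p] :
    fourierT (f.filter p) ρ = ∑ g ∈ f.support, (if p g then f g else 0) • (ρ g : V →ₗ[ℂ] V) := by
  rw [fourierT_eq_sum, Finsupp.support_filter, Finset.sum_filter]
  refine Finset.sum_congr rfl fun g _ => ?_
  split_ifs with hp <;> simp [hp]

lemma fourierT_twist (f : G →₀ ℂ) (ρ : Representation ℂ G V) (χ : G →* ℂˣ) :
    fourierT f (twist ρ χ) = ∑ g ∈ f.support, ((χ g : ℂ) * f g) • (ρ g : V →ₗ[ℂ] V) := by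
  rw [fourierT_eq_sum]
  refine Finset.sum_congr rfl fun g _ => ?_
  ext v
  simp [smul_smul, mul_comm]

variable {A : Type*} [CommGroup A] [Finite A] [Fintype (A →* ℂˣ)]

lemma sum_fourierT_twist_comp (π : G →* A) (p : G → Prop) [DecidablePred p]
    (hp : ∀ g, p g ↔ π g = 1) (f : G →₀ ℂ) (ρ : Representation ℂ G V) :
    ∑ ψ : A →* ℂˣ, fourierT f (twist ρ (ψ.comp π))
      = (Fintype.card (A →* ℂˣ) : ℂ) • fourierT (f.filter p) ρ := by
  classical
  simp only [fourierT_twist, fourierT_filter, Finset.smul_sum]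
  rw [Finset.sum_comm]
  refine Finset.sum_congr rfl fun g _ => ?_
  simp only [MonoidHom.comp_apply, mul_smul, ← Finset.sum_smul,
    MonoidHom.sum_units_apply_eq_ite, hp]
  split_ifs <;> simp

lemma fourierT_eq_fourierT_filter_of_twist_comp (π : G →* A) (p : G → Prop) [DecidablePred p]
    (hp : ∀ g, p g ↔ π g = 1) (f : G →₀ ℂ) (ρ : Representation ℂ G V)
    (htw : ∀ ψ : A →* ℂˣ, fourierT f (twist ρ (ψ.comp π)) = fourierT f ρ) :
    fourierT f ρ = fourierT (f.filter p) ρ := by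
  have hsum := sum_fourierT_twist_comp π p hp f ρ
  rw [Finset.sum_congr rfl fun ψ _ => htw ψ, Finset.sum_const, Finset.card_univ,
    ← Nat.cast_smul_eq_nsmul ℂ] at hsum
  exact smul_right_injective _ (Nat.cast_ne_zero.mpr Fintype.card_ne_zero) hsum

end FourierTransform

section SupportedIn

variable {G : Type u} [Group G] {H : Subgroup G} {C : Set (RepOn G)} {f : G →₀ ℂ}

lemma HCommutes.fourierT_twist_eq (hf : HCommutes H C fun P => fourierT f P.ρ)
    {P : RepOn G} (hP : P ∈ C) (χ : TrivOn H) (hχ : twistRepOn P χ ∈ C) :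
    fourierT f (twist P.ρ χ.1) = fourierT f P.ρ := by
  have hid := hf P hP _ hχ LinearMap.id fun h => by
    ext v
    change P.ρ h v = twist P.ρ χ.1 h v
    rw [twist_apply, χ.2 h h.2, Units.val_one, one_smul]
  exact hid.symm

lemma hCommutes_fourierT_of_support_subset (C : Set (RepOn G))
    (hf : ∀ g ∈ f.support, g ∈ H) : HCommutes H C fun P => fourierT f P.ρ := by
  intro π₁ _ π₂ _ α hα
  ext v
  simp only [LinearMap.comp_apply, fourierT_eq_sum, LinearMap.sum_apply, LinearMap.smul_apply,
    map_sum, map_smul]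
  refine Finset.sum_congr rfl fun g hg => ?_
  rw [← LinearMap.comp_apply, hα ⟨g, hf g hg⟩, LinearMap.comp_apply]

end SupportedIn

/-- `G` is treated as a discrete group with counting Haar measure, so the smooth compactly
supported functions are `G →₀ ℂ` and `f̂(π) = ∑_g f(g) π(g)`. -/
theorem statement12_general {G : Type u} [Group G] (H : Subgroup G) [H.Normal] [Finite (G ⧸ H)]
    [DecidablePred (· ∈ H)]
    (hab : ∀ a b : G ⧸ H, a * b = b * a)
    (C : Set (RepOn G))
    (htwist : ∀ P ∈ C, ∀ χ : TrivOn H, twistRepOn P χ ∈ C)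
    (f : G →₀ ℂ) :
    (HCommutes H C (fun P => fourierT f P.ρ) ↔
      ∀ P ∈ C, fourierT f P.ρ = fourierT (f.filter (· ∈ H)) P.ρ) ∧
    ((∀ f₁ f₂ : G →₀ ℂ, (∀ P ∈ C, fourierT f₁ P.ρ = fourierT f₂ P.ρ) → f₁ = f₂) →
      (HCommutes H C (fun P => fourierT f P.ρ) ↔ ∀ g : G, g ∉ H → f g = 0)) := by
  let _ : CommGroup (G ⧸ H) := { mul_comm := hab }
  let _ : Fintype ((G ⧸ H) →* ℂˣ) := Fintype.ofFinite _
  have hmem (g : G) : g ∈ H ↔ QuotientGroup.mk' H g = 1 := (QuotientGroup.eq_one_iff g).symm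
  have key : HCommutes H C (fun P => fourierT f P.ρ) ↔
      ∀ P ∈ C, fourierT f P.ρ = fourierT (f.filter (· ∈ H)) P.ρ := by
    refine ⟨fun hf P hP => ?_, fun heq π₁ h₁ π₂ h₂ α hα => ?_⟩
    · refine fourierT_eq_fourierT_filter_of_twist_comp _ _ hmem f P.ρ fun ψ => ?_
      exact hf.fourierT_twist_eq hP ⟨ψ.comp (QuotientGroup.mk' H), fun h hh => by
        rw [MonoidHom.comp_apply, (hmem h).1 hh, map_one]⟩ (htwist P hP _)
    · have hsupp : ∀ g ∈ (f.filter (· ∈ H)).support, g ∈ H := fun g hg => by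
        rw [Finsupp.support_filter, Finset.mem_filter] at hg
        exact hg.2
      show α ∘ₗ fourierT f π₁.ρ = fourierT f π₂.ρ ∘ₗ α
      rw [heq π₁ h₁, heq π₂ h₂]
      exact hCommutes_fourierT_of_support_subset C hsupp π₁ h₁ π₂ h₂ α hα
  refine ⟨key, fun hinj => key.trans ?_⟩
  rw [← forall_congr' fun g => not_imp_comm, ← Finsupp.filter_eq_self_iff]
  exact ⟨fun h => (hinj _ _ h).symm, fun h P _ => by rw [h]⟩

/-- Let `H ◁ G` be open of finite index with `G/H` abelian, and `C` a
class of representations containing all irreducibles and stable under twists by characters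
of `G/H`.  (We model the smooth compactly supported functions on `G`, for a discrete—hence
locally profinite—group `G` with counting Haar measure, as the finitely supported functions
`f : G →₀ ℂ`, so that `f̂(π) = π(f) = ∑_g f(g) π(g)`.)  Then `f̂` commutes with all
`H`-intertwiners between members of `C` if and only if `f̂ = (f·1_H)^`.  Consequently, if
the Fourier transform is injective on `C`, then `f̂` is supported in `H` (in the
intertwining sense) if and only if `f` is supported in `H`. -/
theorem statement12 {G : Type u} [Group G] (H : Subgroup G) [H.Normal] [Finite (G ⧸ H)]
    [DecidablePred (· ∈ H)]
    (hab : ∀ a b : G ⧸ H, a * b = b * a)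
    (C : Set (RepOn G))
    (hirr : ∀ P : RepOn G, IsIrreducibleRep P.ρ → P ∈ C)
    (htwist : ∀ P ∈ C, ∀ χ : TrivOn H, twistRepOn P χ ∈ C)
    (f : G →₀ ℂ) :
    (HCommutes H C (fun P => fourierT f P.ρ) ↔
      ∀ P ∈ C, fourierT f P.ρ = fourierT (f.filter (· ∈ H)) P.ρ) ∧
    ((∀ f₁ f₂ : G →₀ ℂ, (∀ P ∈ C, fourierT f₁ P.ρ = fourierT f₂ P.ρ) → f₁ = f₂) →
      (HCommutes H C (fun P => fourierT f P.ρ) ↔ ∀ g : G, g ∉ H → f g = 0)) :=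
  statement12_general H hab C htwist f
end
end
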